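/- arXiv:1402.5002 — 4 statements merged into one kernel-verified Lean document; each statement's English description precedes it below -/
import Mathlib

section
/- Let σ₁,…,σ_d (d odd) satisfy the Clifford relations on ℂ^{2^{(d-1)/2}}, normalized so that σ₁⋯σ_d = (-i)^{(d-1)/2}·1. If ρ is a permutation of (1,…,d), then Tr(σ_{ρ₁}⋯σ_{ρ_d}) = (-2i)^{(d-1)/2} (-1)^ρ, where (-1)^ρ is the signature of ρ. If (ρ₁,…,ρ_d) ∈ {1,…,d}^d is not a permutation, the trace vanishes. -/
/-!
The Clifford relations say that the `σ i` square to `1` and pairwise anticommute. Sorting the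
word `σ_{ρ₁}⋯σ_{ρ_d}` by adjacent transpositions then multiplies it by `sign ρ`, so it equals
`sign ρ · (-i)^((d-1)/2) · 1`, whose trace carries the extra factor `2^((d-1)/2)`. If `ρ` is not
bijective it misses some index `j`; then `σ j` anticommutes with each of the `d` letters, an odd
number, so conjugation by `σ j` negates the word and its trace vanishes.
-/

theorem SemiconjBy.list_prod_map {M : Type*} [Monoid M] {a : M} {f : M → M} :
    ∀ {l : List M}, (∀ x ∈ l, SemiconjBy a x (f x)) → SemiconjBy a l.prod (l.map f).prod
  | [], _ => SemiconjBy.one_right a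
  | x :: l, h => by
    simpa using (h x (by simp)).mul_right (list_prod_map fun y hy => h y (by simp [hy]))

theorem mul_list_prod_of_anticommute {A : Type*} [Ring A] {s : A} {l : List A}
    (h : ∀ x ∈ l, s * x = -(x * s)) : s * l.prod = (-1) ^ l.length * l.prod * s := by
  rw [← List.prod_map_neg]
  exact SemiconjBy.list_prod_map fun x hx => by simpa [SemiconjBy] using h x hx

theorem Matrix.trace_eq_zero_of_anticommute_involution {n R : Type*} [Fintype n] [DecidableEq n]
    [CommRing R] [IsAddTorsionFree R] {s X : Matrix n n R} (hs : s * s = 1)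
    (h : s * X = -(X * s)) : X.trace = 0 := by
  refine self_eq_neg.mp ?_
  calc X.trace = (X * s * s).trace := by rw [mul_assoc, hs, mul_one]
    _ = (s * X * s).trace := by rw [Matrix.trace_mul_cycle]
    _ = -X.trace := by rw [h, neg_mul, mul_assoc, hs, mul_one, Matrix.trace_neg]

section Anticommuting

variable {A : Type*} [Ring A]

theorem prod_ofFn_comp_swap_castSucc_succ :
    ∀ {n : ℕ} (τ : Fin (n + 1) → A) (i : Fin n),
      τ i.castSucc * τ i.succ = -(τ i.succ * τ i.castSucc) →
      (List.ofFn (τ ∘ Equiv.swap i.castSucc i.succ)).prod = -(List.ofFn τ).prod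
  | n + 1, τ, i, h => by
    induction i using Fin.cases with
    | zero =>
      have hfix (j : Fin n) : Equiv.swap (0 : Fin (n + 2)) 1 j.succ.succ = j.succ.succ :=
        Equiv.swap_apply_of_ne_of_ne (Fin.succ_ne_zero _) (Fin.succ_succ_ne_one _)
      simp only [Fin.castSucc_zero, Fin.succ_zero_eq_one] at h
      simp [List.ofFn_succ, hfix, ← mul_assoc, h]
    | succ i =>
      have hshift (j : Fin (n + 1)) :
          Equiv.swap i.succ.castSucc i.succ.succ j.succ = (Equiv.swap i.castSucc i.succ j).succ := by
        rw [← Fin.succ_castSucc, Fin.succ_injective _ |>.swap_apply]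
      have hzero : Equiv.swap i.succ.castSucc i.succ.succ 0 = 0 :=
        Equiv.swap_apply_of_ne_of_ne (Fin.castSucc_ne_zero_iff.mpr (Fin.succ_ne_zero _)).symm
          (Fin.succ_ne_zero _).symm
      have ih : (List.ofFn fun j => τ (Equiv.swap i.castSucc i.succ j).succ).prod =
          -(List.ofFn fun j => τ j.succ).prod :=
        prod_ofFn_comp_swap_castSucc_succ (τ ∘ Fin.succ) i
          (by simpa only [Function.comp_apply, Fin.succ_castSucc] using h)
      rw [List.ofFn_succ, List.ofFn_succ (f := τ)]
      simp only [Function.comp_apply, hzero, hshift, List.prod_cons, ih, mul_neg]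

theorem prod_ofFn_comp_perm {n : ℕ} {σ : Fin n → A}
    (h : Pairwise fun i j => σ i * σ j = -(σ j * σ i)) (ρ : Equiv.Perm (Fin n)) :
    (List.ofFn (σ ∘ ρ)).prod = (Equiv.Perm.sign ρ : ℤ) • (List.ofFn σ).prod := by
  cases n with
  | zero => simp [Subsingleton.elim ρ 1]
  | succ n =>
    induction ρ using Submonoid.induction_of_closure_eq_top_right
      (Equiv.Perm.mclosure_swap_castSucc_succ n) with
    | one => simp
    | mul_right f _ hswap ih =>
      obtain ⟨i, rfl⟩ := hswap
      have hne := (Fin.castSucc_lt_succ (i := i)).ne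
      rw [Equiv.Perm.coe_mul, ← Function.comp_assoc,
        prod_ofFn_comp_swap_castSucc_succ (σ ∘ f) i (h (f.injective.ne hne)), ih,
        Equiv.Perm.sign_mul, Equiv.Perm.sign_swap hne]
      simp

end Anticommuting

theorem stmt_6_general (d : ℕ) (hd : Odd d)
    (σ : Fin d → Matrix (Fin (2 ^ ((d - 1) / 2))) (Fin (2 ^ ((d - 1) / 2))) ℂ)
    (hcl : ∀ i j, σ i * σ j + σ j * σ i = if i = j then (2 : ℂ) • 1 else 0)
    (hnorm : (List.ofFn σ).prod = ((-Complex.I) ^ ((d - 1) / 2)) • 1) :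
    (∀ ρ : Equiv.Perm (Fin d),
        Matrix.trace (List.ofFn fun i => σ (ρ i)).prod
          = (-2 * Complex.I) ^ ((d - 1) / 2) * ((Equiv.Perm.sign ρ : ℤ) : ℂ)) ∧
    (∀ ρ : Fin d → Fin d, ¬ Function.Bijective ρ →
        Matrix.trace (List.ofFn fun i => σ (ρ i)).prod = 0) := by
  have hsq (i : Fin d) : σ i * σ i = 1 := by
    simpa [← two_smul ℂ (σ i * σ i)] using hcl i i
  have hanti : Pairwise fun i j => σ i * σ j = -(σ j * σ i) := fun i j hij =>
    eq_neg_of_add_eq_zero_left (by simpa [hij] using hcl i j)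
  refine ⟨fun ρ => ?_, fun ρ hρ => ?_⟩
  · change Matrix.trace (List.ofFn (σ ∘ ρ)).prod = _
    rw [prod_ofFn_comp_perm hanti ρ, hnorm, Matrix.trace_smul, Matrix.trace_smul,
      Matrix.trace_one, Fintype.card_fin, show -2 * Complex.I = 2 * -Complex.I by ring, mul_pow]
    simp only [zsmul_eq_mul, smul_eq_mul, Nat.cast_pow, Nat.cast_ofNat]
    ring
  · obtain ⟨j, hj⟩ : ∃ j, ∀ i, ρ i ≠ j := by
      simpa [Function.Surjective] using mt Finite.surjective_iff_bijective.mp hρ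
    refine Matrix.trace_eq_zero_of_anticommute_involution (hsq j) ?_
    rw [mul_list_prod_of_anticommute, List.length_ofFn, hd.neg_one_pow, neg_one_mul, neg_mul]
    simpa using fun i => hanti (hj i).symm

/-- For `σ₁,…,σ_d` (d odd) satisfying the Clifford relations and normalized by
`σ₁⋯σ_d = (-i)^((d-1)/2) · 1`:
(a) for any permutation `ρ` of `(1,…,d)`, `Tr(σ_{ρ₁}⋯σ_{ρ_d}) = (-2i)^((d-1)/2) (-1)^ρ`;
(b) if `(ρ₁,…,ρ_d)` is not a permutation, the trace vanishes. -/
theorem stmt_6 (d : ℕ) (hd : Odd d)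
    (σ : Fin d → Matrix (Fin (2 ^ ((d - 1) / 2))) (Fin (2 ^ ((d - 1) / 2))) ℂ)
    (hsa : ∀ i, (σ i).IsHermitian)
    (hcl : ∀ i j, σ i * σ j + σ j * σ i = if i = j then (2 : ℂ) • 1 else 0)
    (hnorm : (List.ofFn σ).prod = ((-Complex.I) ^ ((d - 1) / 2)) • 1) :
    (∀ ρ : Equiv.Perm (Fin d),
        Matrix.trace (List.ofFn fun i => σ (ρ i)).prod
          = (-2 * Complex.I) ^ ((d - 1) / 2) * ((Equiv.Perm.sign ρ : ℤ) : ℂ)) ∧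
    (∀ ρ : Fin d → Fin d, ¬ Function.Bijective ρ →
        Matrix.trace (List.ofFn fun i => σ (ρ i)).prod = 0) :=
  stmt_6_general d hd σ hcl hnorm
end

section
/- Let σ₁,…,σ_d (d odd) satisfy the Clifford relations on ℂ^{2^{(d-1)/2}} with σ₁⋯σ_d = (-i)^{(d-1)/2}·1. For vectors y₁,…,y_d ∈ ℝ^d, Tr(∏ᵢ (yᵢ·σ)) = (-2i)^{(d-1)/2} Det[y₁,…,y_d], where yᵢ·σ = Σⱼ y_{i,j} σⱼ and Det is the determinant of the matrix with columns y₁,…,y_d. -/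
/-! The map `(y₁, …, y_d) ↦ Tr (∏ᵢ yᵢ·σ)` is multilinear, and it is alternating: in a product
with two equal factors `u·σ`, move the first copy to the second using
`(u·σ)(v·σ) = -(v·σ)(u·σ) + 2⟨u, v⟩` and `(u·σ)² = ⟨u, u⟩`. What remains are traces of products
of `d - 2` factors, and the trace of any product of an odd number `< d` of factors vanishes:
expanded in the generators, every word misses some `σₗ`, which anticommutes with the word, so
`Tr W = Tr (σₗ W σₗ) = -Tr W`. An alternating `d`-form on `ℝ^d` is its value on the standard
basis, here `Tr (σ₁⋯σ_d) = (-i)^((d-1)/2) 2^((d-1)/2)`, times the determinant. -/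

open Matrix

namespace CliffordTrace

variable {ι n 𝕜 : Type*} [DecidableEq ι] [Fintype n] [DecidableEq n] [Field 𝕜]

def IsClifford (σ : ι → Matrix n n 𝕜) : Prop :=
  ∀ i j, σ i * σ j + σ j * σ i = if i = j then (2 : 𝕜) • 1 else 0

variable {σ : ι → Matrix n n 𝕜}

namespace IsClifford

theorem mul_self [NeZero (2 : 𝕜)] (hσ : IsClifford σ) (i : ι) : σ i * σ i = 1 := by
  have h := hσ i i
  rw [if_pos rfl, ← two_smul 𝕜] at h
  exact smul_right_injective _ two_ne_zero h

theorem mul_eq_neg_mul (hσ : IsClifford σ) {i j : ι} (h : i ≠ j) :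
    σ i * σ j = -(σ j * σ i) := by
  have hij := hσ i j
  rw [if_neg h] at hij
  exact eq_neg_of_add_eq_zero_left hij

theorem mul_prod_map_of_notMem (hσ : IsClifford σ) {l : ι} {w : List ι} (hl : l ∉ w) :
    σ l * (w.map σ).prod = (-1 : 𝕜) ^ w.length • ((w.map σ).prod * σ l) := by
  induction w with
  | nil => simp
  | cons a w ih =>
    rw [List.mem_cons, not_or] at hl
    simp only [List.map_cons, List.prod_cons, List.length_cons, pow_succ']
    rw [← mul_assoc, hσ.mul_eq_neg_mul hl.1, neg_mul, mul_assoc, ih hl.2, mul_smul_comm,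
      ← mul_assoc, ← smul_smul, neg_one_smul]

theorem trace_prod_map_eq_zero_of_notMem [NeZero (2 : 𝕜)] (hσ : IsClifford σ) {w : List ι}
    (hw : Odd w.length) {l : ι} (hl : l ∉ w) : trace (w.map σ).prod = 0 := by
  set W := (w.map σ).prod
  have h : trace W = -trace W := calc
    trace W = trace (σ l * W * σ l) := by rw [trace_mul_comm, ← mul_assoc, hσ.mul_self, one_mul]
    _ = -trace W := by
      rw [hσ.mul_prod_map_of_notMem hl, hw.neg_one_pow, neg_one_smul, neg_mul, mul_assoc,
        hσ.mul_self, mul_one, trace_neg]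
  have h2 : (2 : 𝕜) * trace W = 0 := by linear_combination h
  exact (mul_eq_zero.mp h2).resolve_left two_ne_zero

variable [Fintype ι]

theorem linearCombination_mul_add (hσ : IsClifford σ) (u v : ι → 𝕜) :
    Fintype.linearCombination 𝕜 σ u * Fintype.linearCombination 𝕜 σ v
      + Fintype.linearCombination 𝕜 σ v * Fintype.linearCombination 𝕜 σ u
      = (2 * ∑ j, u j * v j) • 1 := by
  simp only [Fintype.linearCombination_apply, Finset.sum_mul_sum]
  rw [Finset.sum_comm (s := Finset.univ) (t := Finset.univ)
    (f := fun j k => (v j • σ j) * (u k • σ k)), ← Finset.sum_add_distrib]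
  have hterm : ∀ j k, (u j • σ j) * (v k • σ k) + (v k • σ k) * (u j • σ j)
      = (u j * v k) • (if j = k then (2 : 𝕜) • (1 : Matrix n n 𝕜) else 0) := fun j k => by
    rw [smul_mul_smul_comm, smul_mul_smul_comm, mul_comm (v k), ← smul_add, hσ j k]
  simp_rw [← Finset.sum_add_distrib, hterm, smul_ite, smul_zero, Finset.sum_ite_eq,
    Finset.mem_univ, if_true, smul_smul, ← Finset.sum_smul, Finset.mul_sum, mul_comm]

theorem linearCombination_mul_self [NeZero (2 : 𝕜)] (hσ : IsClifford σ) (u : ι → 𝕜) :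
    Fintype.linearCombination 𝕜 σ u * Fintype.linearCombination 𝕜 σ u
      = (∑ j, u j * u j) • 1 := by
  have h := hσ.linearCombination_mul_add u u
  rw [← two_smul 𝕜, mul_smul] at h
  exact smul_right_injective _ two_ne_zero h

end IsClifford

noncomputable def traceProd [Fintype ι] (σ : ι → Matrix n n 𝕜) (m : ℕ) :
    MultilinearMap 𝕜 (fun _ : Fin m => ι → 𝕜) 𝕜 :=
  (traceLinearMap n 𝕜 𝕜).compMultilinearMap
    ((MultilinearMap.mkPiAlgebraFin 𝕜 m (Matrix n n 𝕜)).compLinearMap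
      fun _ => Fintype.linearCombination 𝕜 σ)

omit [DecidableEq ι] in
theorem traceProd_apply [Fintype ι] {m : ℕ} (v : Fin m → ι → 𝕜) :
    traceProd σ m v = trace (List.ofFn fun k => Fintype.linearCombination 𝕜 σ (v k)).prod := by
  simp [traceProd, MultilinearMap.mkPiAlgebraFin_apply]

namespace IsClifford

variable [Fintype ι] [NeZero (2 : 𝕜)]

theorem traceProd_eq_zero (hσ : IsClifford σ) {m : ℕ} (hm : Odd m) (hmι : m < Fintype.card ι)
    (v : Fin m → ι → 𝕜) : traceProd σ m v = 0 := by
  have hv : v = fun k => ∑ j, v k j • Pi.single j (1 : 𝕜) := by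
    ext k x; simp [Pi.single_apply]
  rw [hv, MultilinearMap.map_sum]
  refine Finset.sum_eq_zero fun r _ => ?_
  obtain ⟨l, hl⟩ : ∃ l, ∀ k, r k ≠ l := by
    by_contra! h
    exact hmι.not_ge ((Fintype.card_le_of_surjective r h).trans (Fintype.card_fin m).le)
  rw [MultilinearMap.map_smul_univ, traceProd_apply]
  simp only [Fintype.linearCombination_apply_single, one_smul]
  rw [List.ofFn_comp', hσ.trace_prod_map_eq_zero_of_notMem (by simpa) (by simpa), smul_zero]

theorem trace_prod_map_linearCombination_eq_zero (hσ : IsClifford σ) {L : List (ι → 𝕜)}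
    (hodd : Odd L.length) (hlt : L.length < Fintype.card ι) :
    trace (L.map (Fintype.linearCombination 𝕜 σ)).prod = 0 := by
  have h := hσ.traceProd_eq_zero hodd hlt fun k => L[(k : ℕ)]
  rwa [traceProd_apply, List.ofFn_getElem_eq_map] at h

theorem trace_prod_map_linearCombination_append_cons_append_cons (hσ : IsClifford σ)
    (u : ι → 𝕜) (P Q R : List (ι → 𝕜)) (hodd : Odd (P.length + Q.length + R.length))
    (hlt : P.length + Q.length + R.length < Fintype.card ι) :
    trace ((P ++ u :: (Q ++ u :: R)).map (Fintype.linearCombination 𝕜 σ)).prod = 0 := by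
  set c := Fintype.linearCombination 𝕜 σ
  induction Q generalizing P with
  | nil =>
    have hsq : c u * c u = (∑ j, u j * u j) • 1 := hσ.linearCombination_mul_self u
    have h : ((P ++ u :: ([] ++ u :: R)).map c).prod
        = (∑ j, u j * u j) • ((P ++ R).map c).prod := by
      simp only [List.nil_append, List.map_append, List.map_cons, List.prod_append,
        List.prod_cons, ← mul_assoc (c u), hsq, smul_mul_assoc, one_mul,
        mul_smul_comm]
    rw [h, trace_smul, hσ.trace_prod_map_linearCombination_eq_zero (by simpa using hodd)
      (by simpa using hlt), smul_zero]
  | cons q Q ih =>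
    have hswap : c u * c q = -(c q * c u) + (2 * ∑ j, u j * q j) • 1 :=
      eq_neg_add_iff_add_eq.mpr ((add_comm _ _).trans (hσ.linearCombination_mul_add u q))
    have h : ((P ++ u :: (q :: Q ++ u :: R)).map c).prod
        = -((P ++ [q] ++ u :: (Q ++ u :: R)).map c).prod
          + (2 * ∑ j, u j * q j) • ((P ++ Q ++ u :: R).map c).prod := by
      simp only [List.cons_append, List.map_append, List.map_cons, List.map_nil,
        List.prod_append, List.prod_cons, List.prod_nil, ← mul_assoc (c u), hswap]
      noncomm_ring
    have hlen : (P ++ [q]).length + Q.length + R.length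
        = P.length + (q :: Q).length + R.length := by
      simp only [List.length_append, List.length_cons, List.length_nil]; ring
    have hlen' : (P ++ Q ++ u :: R).length = P.length + (q :: Q).length + R.length := by
      simp only [List.length_append, List.length_cons]; ring
    rw [h, trace_add, trace_neg, ih (P ++ [q]) (hlen ▸ hodd) (hlen ▸ hlt), trace_smul,
      hσ.trace_prod_map_linearCombination_eq_zero (hlen' ▸ hodd) (hlen' ▸ hlt), neg_zero,
      smul_zero, add_zero]

theorem trace_prod_map_linearCombination_eq_zero_of_not_nodup (hσ : IsClifford σ)
    {L : List (ι → 𝕜)} (hL : ¬L.Nodup) (hodd : Odd L.length)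
    (hle : L.length ≤ Fintype.card ι + 1) :
    trace (L.map (Fintype.linearCombination 𝕜 σ)).prod = 0 := by
  obtain ⟨u, hu⟩ : ∃ u, List.Sublist [u, u] L := by simpa [List.nodup_iff_sublist] using hL
  obtain ⟨L₁, L₂, rfl, hu₁, hu₂⟩ := List.cons_sublist_iff.mp hu
  obtain ⟨P, Q₁, rfl⟩ := List.mem_iff_append.mp hu₁
  obtain ⟨Q₂, R, rfl⟩ := List.mem_iff_append.mp (List.singleton_sublist.mp hu₂)
  have hlen : (P ++ u :: Q₁ ++ (Q₂ ++ u :: R)).length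
      = P.length + (Q₁ ++ Q₂).length + R.length + 2 := by
    simp only [List.length_append, List.length_cons]; ring
  rw [hlen] at hodd hle
  rw [show P ++ u :: Q₁ ++ (Q₂ ++ u :: R) = P ++ u :: (Q₁ ++ Q₂ ++ u :: R) by simp]
  exact hσ.trace_prod_map_linearCombination_append_cons_append_cons u P (Q₁ ++ Q₂) R
    ((Nat.odd_add.mp hodd).mpr even_two) (by omega)

noncomputable def traceProdAlternating (hσ : IsClifford σ) {m : ℕ} (hm : Odd m)
    (hmι : m ≤ Fintype.card ι + 1) : (ι → 𝕜) [⋀^Fin m]→ₗ[𝕜] 𝕜 where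
  toMultilinearMap := traceProd σ m
  map_eq_zero_of_eq' v i j hij hne := by
    change traceProd σ m v = 0
    rw [traceProd_apply, List.ofFn_comp']
    exact hσ.trace_prod_map_linearCombination_eq_zero_of_not_nodup
      (fun h => hne (List.nodup_ofFn.mp h hij)) (by simpa using hm) (by simpa using hmι)

end IsClifford

theorem IsClifford.trace_prod_eq_trace_prod_mul_det [NeZero (2 : 𝕜)] {d : ℕ}
    {σ : Fin d → Matrix n n 𝕜} (hσ : IsClifford σ) (hd : Odd d) (v : Fin d → Fin d → 𝕜) :
    trace (List.ofFn fun k => Fintype.linearCombination 𝕜 σ (v k)).prod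
      = trace (List.ofFn σ).prod * (of v).det := by
  set G := hσ.traceProdAlternating hd (by simp)
  have hG : ∀ w, G w = trace (List.ofFn fun k => Fintype.linearCombination 𝕜 σ (w k)).prod :=
    traceProd_apply
  have hbasis : G (Pi.basisFun 𝕜 (Fin d)) = trace (List.ofFn σ).prod := by
    simp only [hG, Pi.basisFun_apply, Fintype.linearCombination_apply_single, one_smul]
  rw [← hG, ← hbasis, ← Pi.basisFun_det_apply, ← smul_eq_mul, ← AlternatingMap.smul_apply,
    ← G.eq_smul_basis_det]

end CliffordTrace

theorem stmt_7_general (d : ℕ) (hd : Odd d)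
    (σ : Fin d → Matrix (Fin (2 ^ ((d - 1) / 2))) (Fin (2 ^ ((d - 1) / 2))) ℂ)
    (hcl : ∀ i j, σ i * σ j + σ j * σ i = if i = j then (2 : ℂ) • 1 else 0)
    (hnorm : (List.ofFn σ).prod = ((-Complex.I) ^ ((d - 1) / 2)) • 1)
    (y : Fin d → Fin d → ℝ) :
    Matrix.trace (List.ofFn fun i => ∑ j, ((y i j : ℂ) • σ j)).prod
      = (-2 * Complex.I) ^ ((d - 1) / 2) *
        ((Matrix.det (Matrix.of fun k i => y i k) : ℝ) : ℂ) := by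
  have h := CliffordTrace.IsClifford.trace_prod_eq_trace_prod_mul_det (σ := σ) hcl hd
    fun i j => (y i j : ℂ)
  simp only [Fintype.linearCombination_apply] at h
  have hdet : ((of fun k i => y i k).det : ℂ) = (of fun i j => (y i j : ℂ)).det := by
    rw [← det_transpose]
    exact RingHom.map_det Complex.ofRealHom _
  rw [h, hnorm, trace_smul, trace_one, Fintype.card_fin, smul_eq_mul, hdet,
    show -2 * Complex.I = -Complex.I * 2 by ring, mul_pow]
  push_cast
  ring

/-- For `σ₁,…,σ_d` (d odd) satisfying the Clifford relations with
`σ₁⋯σ_d = (-i)^((d-1)/2) · 1`, and vectors `y₁,…,y_d ∈ ℝ^d`,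
`Tr(∏ᵢ (yᵢ·σ)) = (-2i)^((d-1)/2) Det[y₁,…,y_d]`, where `yᵢ·σ = Σⱼ y_{i,j} σⱼ` and `Det` is
the determinant of the matrix with columns `y₁,…,y_d`. -/
theorem stmt_7 (d : ℕ) (hd : Odd d)
    (σ : Fin d → Matrix (Fin (2 ^ ((d - 1) / 2))) (Fin (2 ^ ((d - 1) / 2))) ℂ)
    (hsa : ∀ i, (σ i).IsHermitian)
    (hcl : ∀ i j, σ i * σ j + σ j * σ i = if i = j then (2 : ℂ) • 1 else 0)
    (hnorm : (List.ofFn σ).prod = ((-Complex.I) ^ ((d - 1) / 2)) • 1)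
    (y : Fin d → Fin d → ℝ) :
    Matrix.trace (List.ofFn fun i => ∑ j, ((y i j : ℂ) • σ j)).prod
      = (-2 * Complex.I) ^ ((d - 1) / 2) *
        ((Matrix.det (Matrix.of fun k i => y i k) : ℝ) : ℂ) :=
  stmt_7_general d hd σ hcl hnorm y
end

section
/- Let σ₁,…,σ_d (d odd) satisfy the Clifford relations with σ₁⋯σ_d = (-i)^{(d-1)/2}·1. For y₀ = 0, y₁,…,y_d ∈ ℝ^d, Tr(∏_{i=1}^d (yᵢ·σ)) = (-2i)^{(d-1)/2} d! · Vol[0, y₁,…,y_d], where Vol denotes the oriented volume of the simplex with vertices 0, y₁,…,y_d. -/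
/-!
Write `v̸ = ∑ j, v j • σ j`. For `d` odd, `v ↦ tr (v̸₁ ⋯ v̸_d)` is an alternating `d`-linear form,
hence equals `det [v₁, …, v_d] · tr (σ₁ ⋯ σ_d)`, and `det = d! · Vol`.

A product of an odd number `k < d` of generators misses some `σⱼ`, which anticommutes with it, so
conjugating by `σⱼ` shows that its trace vanishes; by multilinearity the same holds for odd products
of fewer than `d` slashed vectors. In a `d`-fold product, `u̸w̸ + w̸u̸ = 2 (u ⬝ᵥ w)` then shows that
swapping adjacent factors flips the sign of the trace, and `w̸w̸ = w ⬝ᵥ w` that two equal adjacent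
factors kill it: in both cases only `d - 2` factors remain. Moving one copy of a repeated vector next
to the other gives alternation.
-/

/-- The oriented volume of the simplex `[y₀, y₁, …, y_d]` in `ℝ^d`:
`(1/d!)` times the determinant of the matrix with columns `yᵢ - y₀`. -/
noncomputable def orientedSimplexVol (d : ℕ) (y₀ : Fin d → ℝ) (y : Fin d → Fin d → ℝ) : ℝ :=
  ((d.factorial : ℝ))⁻¹ * Matrix.det (Matrix.of fun k i => y i k - y₀ k)

open Matrix

def IsCliffordFamily (K : Type*) {ι A : Type*} [CommRing K] [Ring A] [Algebra K A]
    [DecidableEq ι] (σ : ι → A) : Prop :=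
  ∀ i j, σ i * σ j + σ j * σ i = if i = j then (2 : K) • (1 : A) else 0

namespace IsCliffordFamily

section CommRing

variable {K ι A : Type*} [CommRing K] [Ring A] [Algebra K A] [DecidableEq ι] {σ : ι → A}

theorem anticomm (hσ : IsCliffordFamily K σ) {i j : ι} (hij : i ≠ j) :
    σ i * σ j = -(σ j * σ i) := by
  have h := hσ i j
  rw [if_neg hij] at h
  exact eq_neg_of_add_eq_zero_left h

theorem linearCombination_mul_add [Fintype ι] (hσ : IsCliffordFamily K σ) (u w : ι → K) :
    Fintype.linearCombination K σ u * Fintype.linearCombination K σ w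
      + Fintype.linearCombination K σ w * Fintype.linearCombination K σ u
      = (2 * u ⬝ᵥ w) • 1 := by
  simp only [Fintype.linearCombination_apply, Finset.sum_mul_sum, smul_mul_smul_comm]
  rw [Finset.sum_comm (γ := ι) (f := fun i j => (w i * u j) • (σ i * σ j)),
    ← Finset.sum_add_distrib]
  simp only [← Finset.sum_add_distrib, mul_comm (w _) (u _), ← smul_add, hσ _ _, smul_ite,
    smul_zero, Finset.sum_ite_eq, Finset.mem_univ, if_true, dotProduct, Finset.mul_sum,
    Finset.sum_smul, smul_smul]
  simp only [mul_comm (2 : K)]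

end CommRing

section Field

variable {K ι A : Type*} [Field K] [NeZero (2 : K)] [Ring A] [Algebra K A] [DecidableEq ι]
  {σ : ι → A}

theorem mul_self (hσ : IsCliffordFamily K σ) (i : ι) : σ i * σ i = 1 := by
  have h := hσ i i
  rw [if_pos rfl, ← two_smul K] at h
  exact smul_right_injective A two_ne_zero h

theorem linearCombination_mul_self [Fintype ι] (hσ : IsCliffordFamily K σ) (w : ι → K) :
    Fintype.linearCombination K σ w * Fintype.linearCombination K σ w = (w ⬝ᵥ w) • 1 := by
  have h := hσ.linearCombination_mul_add w w
  rw [← two_smul K, mul_smul] at h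
  exact smul_right_injective A two_ne_zero h

theorem mul_prod_mul_of_notMem (hσ : IsCliffordFamily K σ) {j : ι} {t : List ι} (hj : j ∉ t) :
    σ j * (t.map σ).prod * σ j = (-1) ^ t.length * (t.map σ).prod := by
  induction t with
  | nil => simp [hσ.mul_self j]
  | cons i t ih =>
    rw [List.mem_cons, not_or] at hj
    have hcomm : σ i * (-1) ^ t.length = (-1) ^ t.length * σ i :=
      ((Commute.neg_one_right (σ i)).pow_right _).eq
    calc σ j * ((i :: t).map σ).prod * σ j
        = (σ j * σ i) * ((t.map σ).prod * σ j) := by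
          simp only [List.map_cons, List.prod_cons, mul_assoc]
      _ = -(σ i * (σ j * (t.map σ).prod * σ j)) := by
          rw [hσ.anticomm hj.1]; noncomm_ring
      _ = (-1) ^ (i :: t).length * ((i :: t).map σ).prod := by
          rw [ih hj.2, ← mul_assoc, hcomm]
          simp only [List.length_cons, List.map_cons, List.prod_cons, pow_succ, mul_assoc]
          noncomm_ring

end Field

section Trace

variable {K n : Type*} [Field K] [NeZero (2 : K)] [Fintype n] [DecidableEq n] {d : ℕ}
  {σ : Fin d → Matrix n n K}

local notation "slash" => Fintype.linearCombination K σ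

theorem trace_prod_eq_zero (hσ : IsCliffordFamily K σ) {t : List (Fin d)}
    (hodd : Odd t.length) (hlt : t.length < d) : trace (t.map σ).prod = 0 := by
  obtain ⟨j, -, hj⟩ := Finset.exists_mem_notMem_of_card_lt_card (s := t.toFinset) (t := .univ)
    (by simpa using t.toFinset_card_le.trans_lt hlt)
  rw [List.mem_toFinset] at hj
  have h := congrArg trace (hσ.mul_prod_mul_of_notMem hj)
  rw [trace_mul_cycle, hσ.mul_self, one_mul, hodd.neg_one_pow, neg_one_mul, trace_neg] at h
  exact (mul_eq_zero.1 (by linear_combination h : (2 : K) * _ = 0)).resolve_left two_ne_zero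

theorem trace_prod_mul_prod_linearCombination_eq_zero (hσ : IsCliffordFamily K σ)
    (L : List (Fin d → K)) (t : List (Fin d)) (hodd : Odd (t.length + L.length))
    (hlt : t.length + L.length < d) :
    trace ((t.map σ).prod * (L.map slash).prod) = 0 := by
  induction L generalizing t with
  | nil => simpa using hσ.trace_prod_eq_zero hodd hlt
  | cons w L ih =>
    have hlen : ∀ j, (t ++ [j]).length + L.length = t.length + (w :: L).length := by
      simp; omega
    have expand : (t.map σ).prod * ((w :: L).map slash).prod
        = ∑ j, w j • (((t ++ [j]).map σ).prod * (L.map slash).prod) := by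
      simp only [List.map_cons, List.prod_cons, Fintype.linearCombination_apply, Finset.sum_mul,
        Finset.mul_sum, List.map_append, List.prod_append, List.map_nil, List.prod_nil, one_mul,
        smul_mul_assoc, mul_smul_comm, mul_assoc]
    rw [expand, trace_sum]
    refine Finset.sum_eq_zero fun j _ => ?_
    rw [trace_smul, ih _ (hlen j ▸ hodd) (hlen j ▸ hlt), smul_zero]

theorem trace_prod_linearCombination_eq_zero (hσ : IsCliffordFamily K σ) {L : List (Fin d → K)}
    (hodd : Odd L.length) (hlt : L.length < d) : trace (L.map slash).prod = 0 := by
  simpa using hσ.trace_prod_mul_prod_linearCombination_eq_zero L [] (by simpa) (by simpa)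

theorem trace_prod_linearCombination_eq_zero_of_length_add_two (hσ : IsCliffordFamily K σ)
    (hd : Odd d) {L : List (Fin d → K)} (hlen : L.length + 2 = d) :
    trace (L.map slash).prod = 0 :=
  hσ.trace_prod_linearCombination_eq_zero (by rw [Nat.odd_iff] at hd ⊢; omega) (by omega)

theorem trace_prod_linearCombination_swap (hσ : IsCliffordFamily K σ) (hd : Odd d)
    (A B : List (Fin d → K)) (u w : Fin d → K) (hlen : (A ++ u :: w :: B).length = d) :
    trace ((A ++ u :: w :: B).map slash).prod = -trace ((A ++ w :: u :: B).map slash).prod := by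
  have hAB : trace ((A ++ B).map slash).prod = 0 :=
    hσ.trace_prod_linearCombination_eq_zero_of_length_add_two hd (by simp at hlen ⊢; omega)
  have expand : ∀ x z : Fin d → K, ((A ++ x :: z :: B).map slash).prod
      = (A.map slash).prod * (slash x * slash z) * (B.map slash).prod := by
    intro x z
    simp only [List.map_append, List.map_cons, List.prod_append, List.prod_cons, mul_assoc]
  rw [expand, expand, eq_sub_of_add_eq (hσ.linearCombination_mul_add u w), mul_sub, sub_mul,
    mul_smul_comm, mul_one, smul_mul_assoc, trace_sub, trace_smul, ← List.prod_append,
    ← List.map_append, hAB, smul_zero, zero_sub]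

theorem trace_prod_linearCombination_append_cons_append_cons (hσ : IsCliffordFamily K σ)
    (hd : Odd d) (A M B : List (Fin d → K)) (w : Fin d → K)
    (hlen : (A ++ w :: (M ++ w :: B)).length = d) :
    trace ((A ++ w :: (M ++ w :: B)).map slash).prod = 0 := by
  induction M generalizing A with
  | nil =>
    have hAB : trace ((A ++ B).map slash).prod = 0 :=
      hσ.trace_prod_linearCombination_eq_zero_of_length_add_two hd (by simp at hlen ⊢; omega)
    simp only [List.nil_append, List.map_append, List.map_cons, List.prod_append, List.prod_cons,
      ← mul_assoc (slash w), hσ.linearCombination_mul_self, smul_mul_assoc, one_mul,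
      mul_smul_comm, trace_smul]
    rw [← List.prod_append, ← List.map_append, hAB, smul_zero]
  | cons u M ih =>
    have hswap := hσ.trace_prod_linearCombination_swap hd A (M ++ w :: B) w u (by simpa using hlen)
    rw [List.cons_append, hswap, show A ++ u :: w :: (M ++ w :: B) = (A ++ [u]) ++ w :: (M ++ w :: B)
      by simp, ih _ (by simp at hlen ⊢; omega), neg_zero]

theorem trace_prod_linearCombination_eq_zero_of_not_nodup (hσ : IsCliffordFamily K σ)
    (hd : Odd d) {L : List (Fin d → K)} (hL : ¬ L.Nodup) (hlen : L.length = d) :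
    trace (L.map slash).prod = 0 := by
  obtain ⟨w, hw⟩ := not_forall_not.1 (mt List.nodup_iff_sublist.2 hL)
  obtain ⟨L₁, L₂, rfl, hw₁, hw₂⟩ := List.cons_sublist_iff.1 hw
  obtain ⟨A, M₁, rfl⟩ := List.mem_iff_append.1 hw₁
  obtain ⟨M₂, B, rfl⟩ := List.mem_iff_append.1 (List.singleton_sublist.1 hw₂)
  rw [show A ++ w :: M₁ ++ (M₂ ++ w :: B) = A ++ w :: (M₁ ++ M₂ ++ w :: B) by simp] at hlen ⊢
  exact hσ.trace_prod_linearCombination_append_cons_append_cons hd A (M₁ ++ M₂) B w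
    hlen

def traceProdAlternating (hσ : IsCliffordFamily K σ) (hd : Odd d) :
    (Fin d → K) [⋀^Fin d]→ₗ[K] K where
  toMultilinearMap := (traceLinearMap n K K).compMultilinearMap
    ((MultilinearMap.mkPiAlgebraFin K d (Matrix n n K)).compLinearMap fun _ => slash)
  map_eq_zero_of_eq' v i j hv hij := by
    have hL : ¬ (List.ofFn v).Nodup := fun h => hij (List.nodup_ofFn.1 h hv)
    have h := hσ.trace_prod_linearCombination_eq_zero_of_not_nodup hd hL List.length_ofFn
    rw [List.map_ofFn] at h
    exact h

theorem traceProdAlternating_apply (hσ : IsCliffordFamily K σ) (hd : Odd d) (v : Fin d → Fin d → K) :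
    hσ.traceProdAlternating hd v = trace (List.ofFn fun i => slash (v i)).prod :=
  rfl

theorem trace_prod_linearCombination_eq_det_mul (hσ : IsCliffordFamily K σ) (hd : Odd d)
    (v : Fin d → Fin d → K) :
    trace (List.ofFn fun i => slash (v i)).prod = det (of v) * trace (List.ofFn σ).prod := by
  have hbasis : hσ.traceProdAlternating hd (Pi.basisFun K (Fin d)) = trace (List.ofFn σ).prod := by
    simp [traceProdAlternating_apply, Fintype.linearCombination_apply_single]
  have h := congrArg (· v) ((hσ.traceProdAlternating hd).eq_smul_basis_det (Pi.basisFun K (Fin d)))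
  simp only [AlternatingMap.smul_apply, Pi.basisFun_det, smul_eq_mul, hbasis] at h
  rw [← traceProdAlternating_apply hσ hd, h, mul_comm]
  rfl

end Trace

end IsCliffordFamily

theorem ofReal_orientedSimplexVol_zero {d : ℕ} (y : Fin d → Fin d → ℝ) :
    ((orientedSimplexVol d 0 y : ℝ) : ℂ) = (d.factorial : ℂ)⁻¹ * det (of fun i j => (y i j : ℂ)) := by
  rw [orientedSimplexVol, Complex.ofReal_mul, Complex.ofReal_inv, Complex.ofReal_natCast,
    ← det_transpose, ← Complex.ofRealHom_eq_coe, RingHom.map_det]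
  congr 2
  ext i j
  simp

theorem stmt_8_general (d : ℕ) (hd : Odd d)
    (σ : Fin d → Matrix (Fin (2 ^ ((d - 1) / 2))) (Fin (2 ^ ((d - 1) / 2))) ℂ)
    (hcl : ∀ i j, σ i * σ j + σ j * σ i = if i = j then (2 : ℂ) • 1 else 0)
    (hnorm : (List.ofFn σ).prod = ((-Complex.I) ^ ((d - 1) / 2)) • 1)
    (y : Fin d → Fin d → ℝ) :
    Matrix.trace (List.ofFn fun i => ∑ j, ((y i j : ℂ) • σ j)).prod
      = (-2 * Complex.I) ^ ((d - 1) / 2) * (d.factorial : ℂ) *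
        ((orientedSimplexVol d 0 y : ℝ) : ℂ) := by
  have h := IsCliffordFamily.trace_prod_linearCombination_eq_det_mul hcl hd fun i j => (y i j : ℂ)
  simp only [Fintype.linearCombination_apply] at h
  rw [h, hnorm, trace_smul, trace_one, Fintype.card_fin, ofReal_orientedSimplexVol_zero]
  rw [show -2 * Complex.I = -Complex.I * 2 by ring, mul_pow]
  have hfac : (d.factorial : ℂ) ≠ 0 := Nat.cast_ne_zero.2 d.factorial_ne_zero
  field_simp
  push_cast
  ring

/-- For `σ₁,…,σ_d` (d odd) satisfying the Clifford relations with
`σ₁⋯σ_d = (-i)^((d-1)/2) · 1`, and `y₀ = 0, y₁,…,y_d ∈ ℝ^d`,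
`Tr(∏_{i=1}^d (yᵢ·σ)) = (-2i)^((d-1)/2) d! · Vol[0, y₁,…,y_d]`. -/
theorem stmt_8 (d : ℕ) (hd : Odd d)
    (σ : Fin d → Matrix (Fin (2 ^ ((d - 1) / 2))) (Fin (2 ^ ((d - 1) / 2))) ℂ)
    (hsa : ∀ i, (σ i).IsHermitian)
    (hcl : ∀ i j, σ i * σ j + σ j * σ i = if i = j then (2 : ℂ) • 1 else 0)
    (hnorm : (List.ofFn σ).prod = ((-Complex.I) ^ ((d - 1) / 2)) • 1)
    (y : Fin d → Fin d → ℝ) :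
    Matrix.trace (List.ofFn fun i => ∑ j, ((y i j : ℂ) • σ j)).prod
      = (-2 * Complex.I) ^ ((d - 1) / 2) * (d.factorial : ℂ) *
        ((orientedSimplexVol d 0 y : ℝ) : ℂ) :=
  stmt_8_general d hd σ hcl hnorm y
end

section
/- Let x ∈ ℝ^d and let 𝔖 = [x₁,…,x_{d+1}] be a nondegenerate simplex in ℝ^d with x_{d+1} = 0. For each j, let 𝔅ⱼ(x) be the sector of the unit ball centered at x cut out by the facet of 𝔖 opposite to xⱼ (the solid-angle sector subtended at x by the points (xᵢ - x)/|xᵢ - x|, i ≠ j, with orientation inherited from 𝔖). Then Σ_{j=1}^{d+1} Vol(𝔅ⱼ(x)) equals Vol(unit ball) if x lies in the interior of 𝔖 and equals 0 if x lies in the exterior of 𝔖. -/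
open MeasureTheory

/-- Oriented volume of the simplex with vertices `u 0, …, u d` in `ℝ^d`:
`(1/d!)` times the determinant of the matrix with columns `u i - u 0`, `i = 1,…,d`. -/
noncomputable def oVol {d : ℕ} (u : Fin (d + 1) → EuclideanSpace ℝ (Fin d)) : ℝ :=
  ((d.factorial : ℝ))⁻¹ * Matrix.det (Matrix.of fun k (i : Fin d) => (u i.succ - u 0) k)

/-- The sector `𝔅ⱼ(x)` of the unit ball centered at `x` cut out by the facet of the simplex
with vertices `v` opposite to the vertex `v j`: all points of the closed unit ball around `x`
lying on rays from `x` through the facet. -/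
def sector {d : ℕ} (x : EuclideanSpace ℝ (Fin d)) (v : Fin (d + 1) → EuclideanSpace ℝ (Fin d))
    (j : Fin (d + 1)) : Set (EuclideanSpace ℝ (Fin d)) :=
  {p | p ∈ Metric.closedBall x 1 ∧
    ∃ q ∈ convexHull ℝ (v '' {i | i ≠ j}), ∃ t : ℝ, 0 ≤ t ∧ p = x + t • (q - x)}

/-- The oriented volume of the sector `𝔅ⱼ(x)`: its Lebesgue measure, signed by the
orientation of the simplex `𝔖ⱼ(x)` with vertices `x + (vᵢ-x)/|vᵢ-x|` (`i ≠ j`) and `x` at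
the `j`-th spot (orientation inherited from the simplex). -/
noncomputable def sectorOrientedVol {d : ℕ} (x : EuclideanSpace ℝ (Fin d))
    (v : Fin (d + 1) → EuclideanSpace ℝ (Fin d)) (j : Fin (d + 1)) : ℝ :=
  Real.sign (oVol (Function.update (fun i => x + ‖v i - x‖⁻¹ • (v i - x)) j x)) *
    (volume (sector x v j)).toReal

/-!
Let `B i` be the barycentric coordinates of `x` with respect to the simplex. Moving the `j`-th
vertex to `x` multiplies the oriented volume by `B j`, and pushing the other vertices radially
onto the unit sphere around `x` rescales it by a positive factor, so the sector `𝔅ⱼ(x)` carries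
the sign `sign (oVol v) * sign (B j)`.

In barycentric coordinates the ray from `x` through a point `p` is `t ↦ B + t • C` with
`∑ C = 0`, and `p ∈ 𝔅ⱼ(x)` exactly when this ray meets the facet `{y j = 0}` of the nonnegative
orthant. For almost every `p` the ray is generic. Then, if `x` is interior, the ray leaves the
orthant through exactly one facet, where `B j > 0`. If `x` is exterior, the ray either misses the
orthant, or it enters through a facet with `B j < 0` and leaves through one with `B j > 0`.
Integrating this signed count of facets over the unit ball gives its volume, resp. `0`.
-/

open Matrix Finset Metric

namespace Real

lemma sign_mul (a b : ℝ) : sign (a * b) = sign a * sign b := by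
  rcases lt_trichotomy a 0 with ha | rfl | ha <;> rcases lt_trichotomy b 0 with hb | rfl | hb <;>
    simp [sign_of_pos, sign_of_neg, mul_pos_of_neg_of_neg, mul_neg_of_neg_of_pos,
      mul_neg_of_pos_of_neg, *]

end Real

section OrientedVolume

variable {d : ℕ}

-- Unlike the formula defining `oVol`, the determinant of the rows `(1, u i)` treats all vertices
-- alike and is affine in each of them.
def homog (y : EuclideanSpace ℝ (Fin d)) : Fin (d + 1) → ℝ := Fin.cons 1 y.ofLp

def homogMatrix (u : Fin (d + 1) → EuclideanSpace ℝ (Fin d)) :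
    Matrix (Fin (d + 1)) (Fin (d + 1)) ℝ :=
  of fun i => homog (u i)

lemma det_homogMatrix_eq_det_sub_apex (u : Fin (d + 1) → EuclideanSpace ℝ (Fin d))
    (j : Fin (d + 1)) :
    (homogMatrix u).det =
      (of fun i => if i = j then homog (u j) else homog (u i) - homog (u j)).det := by
  refine det_eq_of_forall_row_eq_smul_add_const (fun i => if i = j then 0 else 1) j (by simp) ?_
  intro i k
  by_cases hi : i = j <;> simp [hi, homogMatrix]

lemma oVol_eq_det_homogMatrix (u : Fin (d + 1) → EuclideanSpace ℝ (Fin d)) :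
    oVol u = (d.factorial : ℝ)⁻¹ * (homogMatrix u).det := by
  have hminor : (of fun i => if i = 0 then homog (u 0) else homog (u i) - homog (u 0)).submatrix
      Fin.succ Fin.succ = (of fun k (i : Fin d) => (u i.succ - u 0) k)ᵀ := by
    ext m k
    simp [homog]
  rw [oVol, det_homogMatrix_eq_det_sub_apex u 0, det_succ_column_zero, Fin.sum_univ_succ,
    Fin.succAbove_zero, hminor, det_transpose]
  simp [homog]

lemma oVol_lineMap_apex (u : Fin (d + 1) → EuclideanSpace ℝ (Fin d)) (j : Fin (d + 1))
    (s : Fin (d + 1) → ℝ) :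
    oVol (fun i => AffineMap.lineMap (u j) (u i) (s i)) = (∏ i ∈ univ.erase j, s i) * oVol u := by
  set w := fun i => AffineMap.lineMap (u j) (u i) (s i)
  have hrow : ∀ i, i ≠ j → homog (w i) - homog (w j) = s i • (homog (u i) - homog (u j)) := by
    intro i _
    ext k
    cases k using Fin.cases <;> simp [w, homog, AffineMap.lineMap_apply_module']
  have hmat : (of fun i => if i = j then homog (w j) else homog (w i) - homog (w j)) =
      of fun i k => Function.update s j 1 i *
        (of fun i => if i = j then homog (u j) else homog (u i) - homog (u j)) i k := by
    ext i k
    by_cases hi : i = j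
    · simp [hi, w]
    · simpa [hi] using congrFun (hrow i hi) k
  rw [oVol_eq_det_homogMatrix, oVol_eq_det_homogMatrix, det_homogMatrix_eq_det_sub_apex _ j,
    det_homogMatrix_eq_det_sub_apex u j, hmat, det_mul_column, prod_update_of_mem (mem_univ j),
    sdiff_singleton_eq_erase]
  ring

lemma oVol_update_eq_coord_mul (b : AffineBasis (Fin (d + 1)) ℝ (EuclideanSpace ℝ (Fin d)))
    (j : Fin (d + 1)) (x : EuclideanSpace ℝ (Fin d)) :
    oVol (Function.update b j x) = b.coord j x * oVol b := by
  have hx : homog x = ∑ i, b.coord i x • homog (b i) := by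
    ext k
    cases k using Fin.cases
    · simp [homog, b.sum_coord_apply_eq_one]
    · conv_lhs => rw [← b.linear_combination_coord_eq_self x]
      simp only [homog, Fin.cons_succ, WithLp.ofLp_sum, WithLp.ofLp_smul, Finset.sum_apply,
        Pi.smul_apply, smul_eq_mul]
  have hupdate : homogMatrix (Function.update b j x) =
      (homogMatrix b).updateRow j (∑ i, b.coord i x • homogMatrix b i) := by
    ext i : 1
    by_cases hi : i = j
    · subst hi
      simp [homogMatrix, hx]
    · simp [homogMatrix, hi]
  rw [oVol_eq_det_homogMatrix, oVol_eq_det_homogMatrix, hupdate, det_updateRow_sum, smul_eq_mul]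
  ring

end OrientedVolume

section RayInOrthant

variable {ι : Type*} {B C : ι → ℝ}

def RayHitsFacet (B C : ι → ℝ) (j : ι) : Prop :=
  ∃ t : ℝ, 0 ≤ t ∧ B j + t * C j = 0 ∧ ∀ i, 0 ≤ B i + t * C i

open Classical in
noncomputable def signedFacetCount [Fintype ι] (B C : ι → ℝ) : ℝ :=
  ∑ j, if RayHitsFacet B C j then Real.sign (B j) else 0

-- The ray `t ↦ B + t • C` is parallel to no facet of the orthant, and at no time `t ≠ 0` does it
-- pass through a face of codimension two.
def GenericRay (B C : ι → ℝ) : Prop :=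
  (∀ i, C i ≠ 0) ∧ ∀ j k, j ≠ k → B j ≠ 0 → B j * C k ≠ B k * C j

lemma GenericRay.exists_pos [Fintype ι] [Nonempty ι] (hgen : GenericRay B C)
    (hC : ∑ i, C i = 0) : ∃ i, 0 < C i := by
  obtain ⟨i₀⟩ := ‹Nonempty ι›
  simpa using exists_pos_of_sum_zero_of_exists_nonzero C hC ⟨i₀, mem_univ _, hgen.1 i₀⟩

lemma GenericRay.exists_neg [Fintype ι] [Nonempty ι] (hgen : GenericRay B C)
    (hC : ∑ i, C i = 0) : ∃ i, C i < 0 := by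
  obtain ⟨i₀⟩ := ‹Nonempty ι›
  simpa using exists_pos_of_sum_zero_of_exists_nonzero (-C) (by simpa using hC)
    ⟨i₀, mem_univ _, by simpa using hgen.1 i₀⟩

lemma exists_ray_exit [Fintype ι] (hC : ∃ i, C i < 0) {t₀ : ℝ}
    (ht₀ : ∀ i, 0 ≤ B i + t₀ * C i) :
    ∃ j t, t₀ ≤ t ∧ C j < 0 ∧ B j + t * C j = 0 ∧ ∀ i, 0 ≤ B i + t * C i := by
  obtain ⟨i₀, hi₀⟩ := hC
  obtain ⟨j, hj, hmin⟩ := (univ.filter fun i => C i < 0).exists_min_image (fun i => -B i / C i)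
    ⟨i₀, by simpa using hi₀⟩
  simp only [mem_filter, mem_univ, true_and] at hj hmin
  have hle : t₀ ≤ -B j / C j := by rw [le_div_iff_of_neg hj]; linarith [ht₀ j]
  refine ⟨j, -B j / C j, hle, hj, by rw [div_mul_cancel₀ _ hj.ne]; ring, fun i => ?_⟩
  rcases lt_or_ge (C i) 0 with hi | hi
  · have := hmin i hi
    rw [le_div_iff_of_neg hi] at this
    linarith
  · nlinarith [ht₀ i]

lemma exists_ray_entry [Fintype ι] (hC : ∃ i, 0 < C i) {t₀ : ℝ}
    (ht₀ : ∀ i, 0 ≤ B i + t₀ * C i) :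
    ∃ j t, t ≤ t₀ ∧ 0 < C j ∧ B j + t * C j = 0 ∧ ∀ i, 0 ≤ B i + t * C i := by
  obtain ⟨j, t, ht, hj, hjt, hall⟩ := exists_ray_exit (B := B) (C := -C) (t₀ := -t₀)
    (by simpa using hC) (by simpa using ht₀)
  exact ⟨j, -t, by linarith, by simpa using hj, by simpa using hjt, by simpa using hall⟩

lemma GenericRay.eq_of_hit_of_hit (hgen : GenericRay B C) {j k : ι} {t s : ℝ} (ht0 : t ≠ 0)
    (hCjk : 0 < C j * C k) (hj : B j + t * C j = 0) (ht : ∀ i, 0 ≤ B i + t * C i)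
    (hk : B k + s * C k = 0) (hs : ∀ i, 0 ≤ B i + s * C i) : j = k := by
  have hts : t = s := by
    have hk' : 0 ≤ (t - s) * C k := by nlinarith [ht k]
    have hj' : 0 ≤ (s - t) * C j := by nlinarith [hs j]
    have hsq : (t - s) ^ 2 * (C j * C k) ≤ 0 := by nlinarith [mul_nonneg hk' hj']
    have := le_antisymm (nonpos_of_mul_nonpos_left hsq hCjk) (sq_nonneg _)
    exact sub_eq_zero.1 (pow_eq_zero_iff two_ne_zero |>.1 this)
  subst hts
  by_contra hne
  refine hgen.2 j k hne (fun hBj => ?_) (by linear_combination C k * hj - C j * hk)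
  have hCj : C j = 0 := by simpa [hBj, ht0] using hj
  simp [hCj] at hCjk

lemma signedFacetCount_eq_one [Fintype ι] [Nonempty ι] (hB : ∀ i, 0 < B i)
    (hC : ∑ i, C i = 0) (hgen : GenericRay B C) : signedFacetCount B C = 1 := by
  obtain ⟨j, t, ht0, hCj, hj, ht⟩ :=
    exists_ray_exit (hgen.exists_neg hC) (t₀ := 0) (by simpa using fun i => (hB i).le)
  have hhit : ∀ k, RayHitsFacet B C k ↔ k = j := by
    refine fun k => ⟨fun ⟨s, hs0, hk, hs⟩ => ?_, fun hkj => hkj ▸ ⟨t, ht0, hj, ht⟩⟩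
    have hs0' : s ≠ 0 := by rintro rfl; linarith [hB k]
    have hCk : C k < 0 := by nlinarith [hB k]
    exact hgen.eq_of_hit_of_hit hs0' (mul_pos_of_neg_of_neg hCk hCj) hk hs hj ht
  rw [signedFacetCount, Fintype.sum_eq_single j fun k hk => if_neg (mt (hhit k).1 hk),
    if_pos ((hhit j).2 rfl), Real.sign_of_pos (hB j)]

lemma signedFacetCount_eq_zero [Fintype ι] (hB : ∃ i, B i < 0) (hC : ∑ i, C i = 0)
    (hgen : GenericRay B C) : signedFacetCount B C = 0 := by
  by_cases hhit : ∃ j, RayHitsFacet B C j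
  swap
  · simp [signedFacetCount, not_exists.1 hhit]
  obtain ⟨k, hk⟩ := hB
  have : Nonempty ι := ⟨k⟩
  obtain ⟨-, t₁, ht₁0, -, ht₁⟩ := hhit
  have hne_zero : ∀ t, (∀ i, 0 ≤ B i + t * C i) → t ≠ 0 := by
    rintro t ht rfl
    linarith [ht k]
  obtain ⟨je, te, -, hCe, he, hte⟩ := exists_ray_entry (hgen.exists_pos hC) ht₁
  obtain ⟨jx, tx, htx₁, hCx, hx, htx⟩ := exists_ray_exit (hgen.exists_neg hC) ht₁
  -- otherwise the ray would already be in the orthant at `t = 0`, i.e. `B ≥ 0`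
  have hte0 : 0 < te := by
    by_contra! hte0
    rcases le_or_gt (C k) 0 with h | h
    · nlinarith [ht₁ k]
    · nlinarith [hte k]
  have htx0 : 0 < tx := lt_of_le_of_ne (ht₁0.trans htx₁) (hne_zero tx htx).symm
  have hhit : ∀ j, RayHitsFacet B C j → j = je ∨ j = jx := by
    rintro j ⟨t, -, hj, ht⟩
    rcases (hgen.1 j).lt_or_gt with h | h
    · exact .inr (hgen.eq_of_hit_of_hit (hne_zero t ht) (mul_pos_of_neg_of_neg h hCx) hj ht hx htx)
    · exact .inl (hgen.eq_of_hit_of_hit (hne_zero t ht) (mul_pos h hCe) hj ht he hte)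
  rw [signedFacetCount, sum_eq_add je jx (fun h => by linarith [h ▸ hCe])
    (fun j _ hj => if_neg fun hjh => (hhit j hjh).elim hj.1 hj.2) (by simp) (by simp),
    if_pos ⟨te, hte0.le, he, hte⟩, if_pos ⟨tx, htx0.le, hx, htx⟩,
    Real.sign_of_neg (by nlinarith), Real.sign_of_pos (by nlinarith)]
  ring

end RayInOrthant

section Geometry

variable {ι E : Type*} [AddCommGroup E] [Module ℝ E]

lemma AffineBasis.mem_convexHull_image_ne_iff [Fintype ι] (b : AffineBasis ι ℝ E) (j : ι)
    (q : E) : q ∈ convexHull ℝ (b '' {i | i ≠ j}) ↔ b.coord j q = 0 ∧ ∀ i, 0 ≤ b.coord i q := by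
  classical
  constructor
  · intro hq
    have hsub : b '' {i | i ≠ j} ⊆ {q | b.coord j q = 0} ∩ convexHull ℝ (Set.range b) := by
      rintro _ ⟨i, hi, rfl⟩
      exact ⟨b.coord_apply_ne (Ne.symm hi), subset_convexHull ℝ _ (Set.mem_range_self i)⟩
    have hconv : Convex ℝ ({q | b.coord j q = 0} ∩ convexHull ℝ (Set.range b)) :=
      ((convex_singleton 0).affine_preimage (b.coord j)).inter (convex_convexHull ℝ _)
    have := convexHull_min hsub hconv hq
    rwa [b.convexHull_eq_nonneg_coord] at this
  · rintro ⟨hj, hnonneg⟩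
    have hsum : ∑ i ∈ univ.erase j, b.coord i q = 1 := by
      rw [sum_erase univ (f := fun i => b.coord i q) hj, b.sum_coord_apply_eq_one]
    have hq : ∑ i ∈ univ.erase j, b.coord i q • b i = q := by
      rw [sum_erase _ (by simp [hj]), b.linear_combination_coord_eq_self]
    rw [← hq]
    exact (convex_convexHull ℝ _).sum_mem (fun i _ => hnonneg i) hsum
      fun i hi => subset_convexHull ℝ _ ⟨i, ne_of_mem_erase hi, rfl⟩

lemma exists_mem_ray_iff {K : Set E} {x p : E} (hx : x ∉ K) (hp : p ≠ x) :
    (∃ q ∈ K, ∃ s : ℝ, 0 ≤ s ∧ p = x + s • (q - x)) ↔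
      ∃ t : ℝ, 0 ≤ t ∧ x + t • (p - x) ∈ K := by
  constructor
  · rintro ⟨q, hq, s, hs, rfl⟩
    have hs0 : s ≠ 0 := by rintro rfl; simp at hp
    refine ⟨s⁻¹, inv_nonneg.2 hs, ?_⟩
    simpa [smul_smul, hs0] using hq
  · rintro ⟨t, ht, hK⟩
    have ht0 : t ≠ 0 := by rintro rfl; simp_all
    refine ⟨_, hK, t⁻¹, inv_nonneg.2 ht, ?_⟩
    simp [smul_smul, ht0]

lemma AffineMap.apply_add_smul_sub (f : E →ᵃ[ℝ] ℝ) (x p : E) (t : ℝ) :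
    f (x + t • (p - x)) = f x + t * (f p - f x) := by
  have := f.apply_lineMap x p t
  rw [AffineMap.lineMap_apply_module', AffineMap.lineMap_apply_ring'] at this
  rw [add_comm x, this]
  ring

end Geometry

section Measure

variable {E : Type*} [NormedAddCommGroup E] [NormedSpace ℝ E] [MeasurableSpace E] [BorelSpace E]
  [FiniteDimensional ℝ E] (μ : Measure E) [μ.IsAddHaarMeasure]

lemma ae_ne_zero_of_affineMap (g : E →ᵃ[ℝ] ℝ) {y : E} (hy : g y ≠ 0) : ∀ᵐ p ∂μ, g p ≠ 0 := by
  have hnull := Measure.addHaar_affineSubspace μ ((⊥ : Submodule ℝ ℝ).toAffineSubspace.comap g)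
    fun htop => hy (by
      have : y ∈ (⊥ : Submodule ℝ ℝ).toAffineSubspace.comap g :=
        htop ▸ AffineSubspace.mem_top ℝ E y
      simpa using this)
  rw [ae_iff]
  simpa [AffineSubspace.coe_comap, Set.preimage] using hnull

lemma AffineBasis.ae_genericRay {ι : Type*} [Fintype ι] [Nontrivial ι] (b : AffineBasis ι ℝ E)
    (x : E) : ∀ᵐ p ∂μ, GenericRay (fun i => b.coord i x) (fun i => b.coord i p - b.coord i x) := by
  refine (ae_all_iff.2 fun i => ?_).and (ae_all_iff.2 fun j => ae_all_iff.2 fun k => ?_)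
  · obtain ⟨m, hm⟩ := exists_ne i
    by_cases hx : b.coord i x = 0
    · exact ae_ne_zero_of_affineMap μ (b.coord i - AffineMap.const ℝ E (b.coord i x))
        (y := b i) (by simp [hx])
    · exact ae_ne_zero_of_affineMap μ (b.coord i - AffineMap.const ℝ E (b.coord i x))
        (y := b m) (by simp [b.coord_apply_ne hm.symm, hx])
  · by_cases hjk : j ≠ k ∧ b.coord j x ≠ 0
    · filter_upwards [ae_ne_zero_of_affineMap μ
        (b.coord j x • b.coord k - b.coord k x • b.coord j) (y := b k)
        (by simp [b.coord_apply_ne hjk.1, hjk.2])] with p hp _ _ h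
      refine hp ?_
      simp only [AffineMap.coe_sub, AffineMap.coe_smul, Pi.sub_apply, Pi.smul_apply, smul_eq_mul]
      linarith
    · exact .of_forall fun p h hB => (hjk ⟨h, hB⟩).elim

end Measure

section Sectors

variable {d : ℕ}

-- `sector x v j` is the closed set `closedBall x 1` intersected with the cone from `x` over a
-- compact set, which is a countable union of compact sets.
lemma measurableSet_sector (x : EuclideanSpace ℝ (Fin d))
    (v : Fin (d + 1) → EuclideanSpace ℝ (Fin d)) (j : Fin (d + 1)) :
    MeasurableSet (sector x v j) := by
  set K := convexHull ℝ (v '' {i | i ≠ j})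
  have hK : IsCompact K := ((Set.toFinite _).image v).isCompact_convexHull ℝ
  set ray : EuclideanSpace ℝ (Fin d) × ℝ → EuclideanSpace ℝ (Fin d) :=
    fun qt => x + qt.2 • (qt.1 - x)
  have hray : Continuous ray := by fun_prop
  have hsector : sector x v j = closedBall x 1 ∩ ⋃ n : ℕ, ray '' (K ×ˢ Set.Icc 0 (n : ℝ)) := by
    ext p
    constructor
    · rintro ⟨hball, q, hq, t, ht, rfl⟩
      obtain ⟨n, hn⟩ := exists_nat_ge t
      exact ⟨hball, Set.mem_iUnion.2 ⟨n, (q, t), ⟨hq, ht, hn⟩, rfl⟩⟩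
    · rintro ⟨hball, hp⟩
      obtain ⟨n, ⟨q, t⟩, ⟨hq, ht, -⟩, rfl⟩ := Set.mem_iUnion.1 hp
      exact ⟨hball, q, hq, t, ht, rfl⟩
  rw [hsector]
  exact measurableSet_closedBall.inter
    (.iUnion fun n => ((hK.prod isCompact_Icc).image hray).measurableSet)

lemma mem_sector_iff (b : AffineBasis (Fin (d + 1)) ℝ (EuclideanSpace ℝ (Fin d)))
    {x p : EuclideanSpace ℝ (Fin d)} {j : Fin (d + 1)}
    (hx : x ∉ convexHull ℝ (b '' {i | i ≠ j})) (hp : p ≠ x) :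
    p ∈ sector x b j ↔ p ∈ closedBall x 1 ∧
      RayHitsFacet (fun i => b.coord i x) (fun i => b.coord i p - b.coord i x) j := by
  rw [sector, Set.mem_ofPred_eq, exists_mem_ray_iff hx hp]
  simp only [b.mem_convexHull_image_ne_iff, AffineMap.apply_add_smul_sub]
  rfl

variable (b : AffineBasis (Fin (d + 1)) ℝ (EuclideanSpace ℝ (Fin d)))
  (x : EuclideanSpace ℝ (Fin d))

lemma sign_oVol_normalize (hx : ∀ i, b i ≠ x) (j : Fin (d + 1)) :
    Real.sign (oVol (Function.update (fun i => x + ‖b i - x‖⁻¹ • (b i - x)) j x)) =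
      Real.sign (oVol b) * Real.sign (b.coord j x) := by
  have hlineMap : Function.update (fun i => x + ‖b i - x‖⁻¹ • (b i - x)) j x = fun i =>
      AffineMap.lineMap (Function.update b j x j) (Function.update b j x i) ‖b i - x‖⁻¹ := by
    funext i
    by_cases hi : i = j
    · subst hi; simp
    · simp [hi, AffineMap.lineMap_apply_module', add_comm]
  have hpos : 0 < ∏ i ∈ univ.erase j, ‖b i - x‖⁻¹ :=
    prod_pos fun i _ => inv_pos.2 (norm_pos_iff.2 (sub_ne_zero.2 (hx i)))
  rw [hlineMap, oVol_lineMap_apex, Real.sign_mul, Real.sign_of_pos hpos, one_mul,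
    oVol_update_eq_coord_mul, Real.sign_mul, mul_comm]

lemma sum_sectorOrientedVol_eq_integral (hx : ∀ i, b i ≠ x) :
    ∑ j, sectorOrientedVol x b j = Real.sign (oVol b) *
      ∫ p, ∑ j, (sector x b j).indicator (fun _ => Real.sign (b.coord j x)) p := by
  have hint : ∀ j, Integrable ((sector x b j).indicator fun _ => Real.sign (b.coord j x)) :=
    fun j => (integrable_indicator_iff (measurableSet_sector x b j)).2 <|
      integrableOn_const ((measure_mono fun _ hp => hp.1).trans_lt measure_closedBall_lt_top).ne
  rw [integral_finsetSum _ fun j _ => hint j, mul_sum]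
  refine sum_congr rfl fun j _ => ?_
  rw [integral_indicator_const _ (measurableSet_sector x b j), sectorOrientedVol,
    sign_oVol_normalize b x hx, smul_eq_mul, Measure.real]
  ring

lemma sum_indicator_sector_ae_eq [Nontrivial (Fin (d + 1))] (κ : ℝ)
    (hx : ∀ j, x ∉ convexHull ℝ (b '' {i | i ≠ j}))
    (hκ : ∀ C, ∑ i, C i = 0 → GenericRay (fun i => b.coord i x) C →
      signedFacetCount (fun i => b.coord i x) C = κ) :
    (fun p => ∑ j, (sector x b j).indicator (fun _ => Real.sign (b.coord j x)) p)
      =ᵐ[volume] (closedBall x 1).indicator fun _ => κ := by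
  filter_upwards [b.ae_genericRay volume x] with p hgen
  by_cases hball : p ∈ closedBall x 1
  · have hp : p ≠ x := by
      rintro rfl
      obtain ⟨i⟩ := ‹Nontrivial (Fin (d + 1))›.to_nonempty
      exact hgen.1 i (sub_self _)
    have hC : ∑ i, (b.coord i p - b.coord i x) = 0 := by
      rw [sum_sub_distrib, b.sum_coord_apply_eq_one, b.sum_coord_apply_eq_one, sub_self]
    classical
    rw [Set.indicator_of_mem hball, ← hκ _ hC hgen, signedFacetCount]
    refine sum_congr rfl fun j _ => ?_
    simp only [Set.indicator_apply, mem_sector_iff b (hx j) hp, hball, true_and]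
  · rw [Set.indicator_of_notMem hball]
    exact sum_eq_zero fun j _ => Set.indicator_of_notMem (fun h => hball h.1) _

lemma sum_sectorOrientedVol_eq [Nontrivial (Fin (d + 1))] (κ : ℝ)
    (hx : ∀ j, b.coord j x = 0 → ∃ i, b.coord i x < 0)
    (hκ : ∀ C, ∑ i, C i = 0 → GenericRay (fun i => b.coord i x) C →
      signedFacetCount (fun i => b.coord i x) C = κ) :
    ∑ j, sectorOrientedVol x b j =
      Real.sign (oVol b) * κ * volume.real (closedBall (0 : EuclideanSpace ℝ (Fin d)) 1) := by
  have hfacet : ∀ j, x ∉ convexHull ℝ (b '' {i | i ≠ j}) := by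
    intro j hxj
    rw [b.mem_convexHull_image_ne_iff] at hxj
    obtain ⟨i, hi⟩ := hx j hxj.1
    exact (hxj.2 i).not_gt hi
  have hvertex : ∀ i, b i ≠ x := by
    intro i hi
    obtain ⟨m, hm⟩ := exists_ne i
    obtain ⟨k, hk⟩ := hx m (hi ▸ b.coord_apply_ne hm)
    rw [← hi, b.coord_apply] at hk
    split_ifs at hk <;> norm_num at hk
  rw [sum_sectorOrientedVol_eq_integral b x hvertex,
    integral_congr_ae (sum_indicator_sector_ae_eq b x κ hfacet hκ),
    integral_indicator_const _ measurableSet_closedBall, smul_eq_mul,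
    Measure.addHaar_real_closedBall_center]
  ring

end Sectors

theorem stmt_13_general (d : ℕ) (hd : 0 < d) (v : Fin (d + 1) → EuclideanSpace ℝ (Fin d))
    (hv : AffineIndependent ℝ v)
    (x : EuclideanSpace ℝ (Fin d)) :
    (x ∈ interior (convexHull ℝ (Set.range v)) →
      ∑ j, sectorOrientedVol x v j
        = Real.sign (oVol v) *
            (volume (Metric.closedBall (0 : EuclideanSpace ℝ (Fin d)) 1)).toReal) ∧
    (x ∉ closure (convexHull ℝ (Set.range v)) →
      ∑ j, sectorOrientedVol x v j = 0) := by
  have : Nontrivial (Fin (d + 1)) := Fin.nontrivial_iff_two_le.2 (by omega)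
  obtain ⟨b, rfl⟩ : ∃ b : AffineBasis (Fin (d + 1)) ℝ (EuclideanSpace ℝ (Fin d)), ⇑b = v :=
    ⟨⟨v, hv, hv.affineSpan_eq_top_iff_card_eq_finrank_add_one.2 (by simp)⟩, rfl⟩
  refine ⟨fun hx => ?_, fun hx => ?_⟩
  · have hB : ∀ i, 0 < b.coord i x := by rwa [b.interior_convexHull] at hx
    simpa [Measure.real] using sum_sectorOrientedVol_eq b x 1 (fun j h => ((hB j).ne' h).elim)
      fun C hC hgen => signedFacetCount_eq_one hB hC hgen
  · have hclosed : IsClosed (convexHull ℝ (Set.range b)) :=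
      ((Set.finite_range b).isCompact_convexHull ℝ).isClosed
    have hB : ∃ i, b.coord i x < 0 := by
      rw [hclosed.closure_eq, b.convexHull_eq_nonneg_coord] at hx
      simpa using hx
    simpa using sum_sectorOrientedVol_eq b x 0 (fun _ _ => hB)
      fun C hC hgen => signedFacetCount_eq_zero hB hC hgen

/-- solid-angle additivity: for a nondegenerate simplex `𝔖 = [v₁,…,v_{d+1}]`
with `v_{d+1} = 0`, the oriented volumes of the sectors `𝔅ⱼ(x)` sum to the (oriented) volume
of the unit ball when `x` is interior to `𝔖`, and to `0` when `x` is exterior to `𝔖`. -/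
theorem stmt_13 (d : ℕ) (hd : 0 < d) (v : Fin (d + 1) → EuclideanSpace ℝ (Fin d))
    (hv : AffineIndependent ℝ v) (hlast : v (Fin.last d) = 0)
    (x : EuclideanSpace ℝ (Fin d)) :
    (x ∈ interior (convexHull ℝ (Set.range v)) →
      ∑ j, sectorOrientedVol x v j
        = Real.sign (oVol v) *
            (volume (Metric.closedBall (0 : EuclideanSpace ℝ (Fin d)) 1)).toReal) ∧
    (x ∉ closure (convexHull ℝ (Set.range v)) →
      ∑ j, sectorOrientedVol x v j = 0) :=
  stmt_13_general d hd v hv x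
end
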